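/- For every n ≥ 3, the integrality gap of dimension n equals the maximum of Gap⁺ over the vertices of the subtour-elimination polytope: sup{ TSP(c)/SEP(c) : c metric on K_n, SEP(c) > 0 } = max{ Gap⁺(x) : x vertex of P_SEP(n) }. -/

import Mathlib

open Finset

/-- Membership in the subtour-elimination polytope `P_SEP(n)`.
A point is encoded as a symmetric matrix with zero diagonal; the entry `x i j`
is the value on the (undirected) edge `ij` of the complete graph `K_n`. -/
def InPSEP (n : ℕ) (x : Fin n → Fin n → ℝ) : Prop :=
  (∀ i j, x i j = x j i) ∧ (∀ i, x i i = 0) ∧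
  (∀ v, (∑ j, x v j) = 2) ∧
  (∀ S : Finset (Fin n), 3 ≤ S.card → S.card + 3 ≤ n →
    2 ≤ ∑ i ∈ S, ∑ j ∈ Sᶜ, x i j) ∧
  (∀ i j, 0 ≤ x i j ∧ x i j ≤ 1)

/-- The subtour-elimination polytope, as a set. -/
def PSEP (n : ℕ) : Set (Fin n → Fin n → ℝ) := {x | InPSEP n x}

/-- `x` is a vertex (extreme point) of `P_SEP(n)`. -/
def IsVertex (n : ℕ) (x : Fin n → Fin n → ℝ) : Prop :=
  x ∈ (PSEP n).extremePoints ℝ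

/-- A metric cost vector on `K_n`: symmetric, zero diagonal, nonnegative,
satisfying the triangle inequality. -/
def IsMetric (n : ℕ) (c : Fin n → Fin n → ℝ) : Prop :=
  (∀ i j, c i j = c j i) ∧ (∀ i, c i i = 0) ∧ (∀ i j, 0 ≤ c i j) ∧
  (∀ i j k, i ≠ j → j ≠ k → i ≠ k → c i j ≤ c i k + c k j)

/-- The "dot product" `c · x` over the edges of `K_n` (each undirected edge
counted once, whence the division by `2`). -/
noncomputable def dotE (n : ℕ) (c x : Fin n → Fin n → ℝ) : ℝ :=
  (∑ i, ∑ j, c i j * x i j) / 2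

/-- The cost of the Hamiltonian tour that visits the nodes in the cyclic order
`σ 0, σ 1, …, σ (n-1), σ 0`. -/
noncomputable def tourCost (n : ℕ) (c : Fin n → Fin n → ℝ) (σ : Equiv.Perm (Fin n)) : ℝ :=
  ∑ i, c (σ i) (σ (finRotate n i))

/-- `TSP(c)`: minimum cost of a Hamiltonian tour. -/
noncomputable def TSP (n : ℕ) (c : Fin n → Fin n → ℝ) : ℝ :=
  sInf {r | ∃ σ : Equiv.Perm (Fin n), r = tourCost n c σ}

/-- `SEP(c)`: optimal value of the subtour-elimination relaxation. -/
noncomputable def SEP (n : ℕ) (c : Fin n → Fin n → ℝ) : ℝ :=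
  sInf {r | ∃ x, InPSEP n x ∧ r = dotE n c x}

/-- `Gap(x)`: the supremum of `TSP(c)/SEP(c)` over metric costs `c` with
`SEP(c) > 0` for which `x` is an optimal solution of `SEP(c)`. -/
noncomputable def Gap (n : ℕ) (x : Fin n → Fin n → ℝ) : ℝ :=
  sSup {r | ∃ c, IsMetric n c ∧ 0 < SEP n c ∧ dotE n c x = SEP n c ∧
    r = TSP n c / SEP n c}

/-- `Gap⁺(x)`: the supremum of `TSP(c)/(c·x)` over metric costs `c` with `c·x > 0`. -/
noncomputable def GapPlus (n : ℕ) (x : Fin n → Fin n → ℝ) : ℝ :=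
  sSup {r | ∃ c, IsMetric n c ∧ 0 < dotE n c x ∧ r = TSP n c / dotE n c x}

open Classical in
/-- The number of edges of the support graph `G_x` (non-zero components of `x`). -/
noncomputable def supportSize (n : ℕ) (x : Fin n → Fin n → ℝ) : ℕ :=
  (Finset.univ.filter fun p : Fin n × Fin n => p.1 < p.2 ∧ x p.1 p.2 ≠ 0).card

open Classical in
/-- The degree of the node `v` in the support graph `G_x`. -/
noncomputable def suppDegree (n : ℕ) (x : Fin n → Fin n → ℝ) (v : Fin n) : ℕ :=
  (Finset.univ.filter fun j : Fin n => j ≠ v ∧ x v j ≠ 0).card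

/-- `x` is fractional: some edge has value not in `{0,1}`. -/
def IsFracPoint (n : ℕ) (x : Fin n → Fin n → ℝ) : Prop :=
  ∃ i j, i ≠ j ∧ x i j ≠ 0 ∧ x i j ≠ 1

/-- The BB-move `BB(x, ab)`: a new node `w = Fin.last n` is added, the edge `ab`
is set to `0`, the edges `aw, wb` are set to `1`, all other edges at `w` are `0`,
and the remaining entries are copied from `x`. -/
noncomputable def BB {n : ℕ} (x : Fin n → Fin n → ℝ) (a b : Fin n)
    (i j : Fin (n + 1)) : ℝ :=
  if hi : i = Fin.last n then
    (if j = Fin.castSucc a ∨ j = Fin.castSucc b then 1 else 0)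
  else if hj : j = Fin.last n then
    (if i = Fin.castSucc a ∨ i = Fin.castSucc b then 1 else 0)
  else if (i = Fin.castSucc a ∧ j = Fin.castSucc b) ∨
          (i = Fin.castSucc b ∧ j = Fin.castSucc a) then 0
  else x (i.castPred hi) (j.castPred hj)

/-- `IsSuccessor x y`: `y` is obtained from `x` by a finite (possibly empty)
sequence of BB-moves, each applied on a `1`-edge. -/
inductive IsSuccessor : {n m : ℕ} → (Fin n → Fin n → ℝ) → (Fin m → Fin m → ℝ) → Prop
  | refl {n : ℕ} (x : Fin n → Fin n → ℝ) : IsSuccessor x x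
  | step {n m : ℕ} (x : Fin n → Fin n → ℝ) (y : Fin m → Fin m → ℝ) (a b : Fin m) :
      IsSuccessor x y → a ≠ b → y a b = 1 → IsSuccessor x (BB y a b)

/-- The consecutive pairs of a cyclic sequence of nodes (including the
wrap-around pair). -/
def cyclicPairs {n : ℕ} (p : List (Fin n)) : List (Fin n × Fin n) :=
  p.zip (p.rotate 1)

/-- The multiplicity with which the closed walk `p` traverses the undirected
edge `ij`. -/
def multE {n : ℕ} (p : List (Fin n)) (i j : Fin n) : ℕ :=
  (cyclicPairs p).countP fun q =>
    decide ((q.1 = i ∧ q.2 = j) ∨ (q.1 = j ∧ q.2 = i))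

/-- `p` is a Hamiltonian walk on the graph with adjacency relation `A`:
a nonempty closed walk visiting every node at least once, using only edges of
the graph, and traversing every edge at most twice. -/
def IsHamWalk {n : ℕ} (A : Fin n → Fin n → Prop) (p : List (Fin n)) : Prop :=
  p ≠ [] ∧ (∀ v : Fin n, v ∈ p) ∧ (∀ q ∈ cyclicPairs p, A q.1 q.2) ∧
  (∀ i j : Fin n, multE p i j ≤ 2)

/-- Admissibility of the `λ` variables of the LPs `DOPT⁺` and `DOPTI`:
nonnegative, symmetric in the first two (edge) indices, and supported on
genuine triples. -/
def LamOK (n : ℕ) (lam : Fin n → Fin n → Fin n → ℝ) : Prop :=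
  (∀ i j k, 0 ≤ lam i j k) ∧ (∀ i j k, lam i j k = lam j i k) ∧
  (∀ i j k, i = j ∨ k = i ∨ k = j → lam i j k = 0)

/-- The term `∑_{k ≠ i,j} (−λ_{ijk} + λ_{ikj} + λ_{jki})` of the LP constraints. -/
noncomputable def lamTerm (n : ℕ) (lam : Fin n → Fin n → Fin n → ℝ) (i j : Fin n) : ℝ :=
  ∑ k ∈ ({i, j} : Finset (Fin n))ᶜ, (-lam i j k + lam i k j + lam j k i)

/-- The characteristic vector `t_{ij}` of the tour `σ` on the edge `ij`. -/
def tourMult (n : ℕ) (σ : Equiv.Perm (Fin n)) (i j : Fin n) : ℕ :=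
  (Finset.univ.filter fun k : Fin n =>
    (σ k = i ∧ σ (finRotate n k) = j) ∨ (σ k = j ∧ σ (finRotate n k) = i)).card

/-- Feasibility for the LP `DOPT⁺(x)`. -/
def DOPTplusFeasible (n : ℕ) (x : Fin n → Fin n → ℝ)
    (lam : Fin n → Fin n → Fin n → ℝ) (μ : Equiv.Perm (Fin n) → ℝ) : Prop :=
  LamOK n lam ∧ (∀ σ, 0 ≤ μ σ) ∧
  (∀ i j, i ≠ j →
    lamTerm n lam i j + ∑ σ : Equiv.Perm (Fin n), (tourMult n σ i j : ℝ) * μ σ ≤ x i j)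

/-- The optimal value of the LP `DOPT⁺(x)`. -/
noncomputable def DOPTplus (n : ℕ) (x : Fin n → Fin n → ℝ) : ℝ :=
  sSup {r | ∃ lam μ, DOPTplusFeasible n x lam μ ∧ r = ∑ σ : Equiv.Perm (Fin n), μ σ}

/-- Feasibility for the LP `DOPTI(x)`: `μ` is a finitely supported nonnegative
assignment on Hamiltonian walks of `K_n`. -/
def DOPTIFeasible (n : ℕ) (x : Fin n → Fin n → ℝ)
    (lam : Fin n → Fin n → Fin n → ℝ) (μ : List (Fin n) →₀ ℝ) : Prop :=
  LamOK n lam ∧ (∀ p, 0 ≤ μ p) ∧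
  (∀ p ∈ μ.support, IsHamWalk (fun i j : Fin n => i ≠ j) p) ∧
  (∀ i j, i ≠ j →
    lamTerm n lam i j + ∑ p ∈ μ.support, (multE p i j : ℝ) * μ p ≤ x i j)

/-- The optimal value of the LP `DOPTI(x)`. -/
noncomputable def DOPTI (n : ℕ) (x : Fin n → Fin n → ℝ) : ℝ :=
  sSup {r | ∃ lam μ, DOPTIFeasible n x lam μ ∧ r = ∑ p ∈ μ.support, μ p}

/-- Feasibility for the LP `DOPTII(x)`: `μ` is a finitely supported nonnegative
assignment on Hamiltonian walks of the support graph `G_x`, satisfying the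
edge constraints on `E_x`. -/
def DOPTIIFeasible (n : ℕ) (x : Fin n → Fin n → ℝ) (μ : List (Fin n) →₀ ℝ) : Prop :=
  (∀ p, 0 ≤ μ p) ∧
  (∀ p ∈ μ.support, IsHamWalk (fun i j : Fin n => i ≠ j ∧ 0 < x i j) p) ∧
  (∀ i j, i ≠ j → 0 < x i j →
    ∑ p ∈ μ.support, (multE p i j : ℝ) * μ p ≤ x i j)

/-- The optimal value of the LP `DOPTII(x)`. -/
noncomputable def DOPTII (n : ℕ) (x : Fin n → Fin n → ℝ) : ℝ :=
  sSup {r | ∃ μ, DOPTIIFeasible n x μ ∧ r = ∑ p ∈ μ.support, μ p}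

/-- The constant `C(x, ab) = 2∑_{w_{ab}=0} μ_w + ∑_{w_{ab}=1} μ_w + 2∑_{w_{ab}=2} μ_w`. -/
noncomputable def Cconst {n : ℕ} (μ : List (Fin n) →₀ ℝ) (a b : Fin n) : ℝ :=
  2 * ∑ p ∈ μ.support.filter (fun p => multE p a b = 0), μ p
    + ∑ p ∈ μ.support.filter (fun p => multE p a b = 1), μ p
    + 2 * ∑ p ∈ μ.support.filter (fun p => multE p a b = 2), μ p

/-- The constant `C*(x) = max over 1-edges e of x of C(x, e)`. -/
noncomputable def Cstar {n : ℕ} (x : Fin n → Fin n → ℝ) (μ : List (Fin n) →₀ ℝ) : ℝ :=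
  sSup {r | ∃ a b : Fin n, a ≠ b ∧ x a b = 1 ∧ r = Cconst μ a b}

/-- The node from which the `(d+1)`-st BB-move expands the current `1`-path:
for `d = 0` it is `a` itself, afterwards it is the last inserted node. -/
def aNode {n : ℕ} (a : Fin n) : (d : ℕ) → Fin (n + d)
  | 0 => a
  | d + 1 => Fin.last (n + d)

/-- `d` consecutive BB-moves expanding the `1`-edge `ab` into a `1`-path
with `d` internal nodes. -/
noncomputable def BBiter {n : ℕ} (x : Fin n → Fin n → ℝ) (a b : Fin n) :
    (d : ℕ) → Fin (n + d) → Fin (n + d) → ℝ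
  | 0 => x
  | d + 1 => BB (BBiter x a b d) (aNode a d) (Fin.castLE (Nat.le_add_right n d) b)

/-- Extension of the cost `c` on `K_n` to `K_{n+1}` by adding a new node
`w = Fin.last n` at distance `0` from `b`. -/
noncomputable def extendCost {n : ℕ} (c : Fin n → Fin n → ℝ) (b : Fin n)
    (i j : Fin (n + 1)) : ℝ :=
  if hi : i = Fin.last n then
    (if hj : j = Fin.last n then 0 else c (j.castPred hj) b)
  else if hj : j = Fin.last n then c (i.castPred hi) b
  else c (i.castPred hi) (j.castPred hj)

/-- The cost of a (not necessarily closed) path, given as the list of its nodes. -/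
noncomputable def pathCost {n : ℕ} (c : Fin n → Fin n → ℝ) (p : List (Fin n)) : ℝ :=
  ((p.zip p.tail).map fun q => c q.1 q.2).sum

/-- `p` is a path from `i` to `j` in the graph with adjacency relation `A`. -/
def IsPathIn {n : ℕ} (A : Fin n → Fin n → Prop) (i j : Fin n) (p : List (Fin n)) : Prop :=
  p.head? = some i ∧ p.getLast? = some j ∧ List.Chain' (fun u v => A u v) p

open Classical in
/-- The metric completion of the restriction of `c` to the graph with adjacency
relation `A`: on edges of the graph it is `c`, elsewhere it is the cost of a
shortest path in the graph. -/
noncomputable def metricCompletion (n : ℕ) (A : Fin n → Fin n → Prop)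
    (c : Fin n → Fin n → ℝ) (i j : Fin n) : ℝ :=
  if A i j then c i j else sInf {r | ∃ p, IsPathIn A i j p ∧ r = pathCost c p}

/-- A (nonempty, injective) chain of `1`-edges of `x`. -/
def IsOneChain {n : ℕ} (x : Fin n → Fin n → ℝ) (p : List (Fin n)) : Prop :=
  2 ≤ p.length ∧ p.Nodup ∧ List.Chain' (fun i j => x i j = 1) p

/-- A `1`-path of `x`: a maximal path of `1`-edges in the support graph. -/
def IsMaxOnePath {n : ℕ} (x : Fin n → Fin n → ℝ) (p : List (Fin n)) : Prop :=
  IsOneChain x p ∧ (∀ v, ¬ IsOneChain x (v :: p)) ∧ (∀ v, ¬ IsOneChain x (p ++ [v]))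

section Aux
open Finset

variable {n : ℕ}

/-- The uniform point of `P_SEP(n)`. -/
noncomputable def unifPt (n : ℕ) : Fin n → Fin n → ℝ :=
  fun i j => if i = j then 0 else 2 / (n - 1)

lemma unifPt_mem (hn : 3 ≤ n) : InPSEP n (unifPt n) := by
  have hn1 : (0:ℝ) < (n:ℝ) - 1 := by
    have : (3:ℝ) ≤ (n:ℝ) := by exact_mod_cast hn
    linarith
  have hval : (0:ℝ) ≤ 2 / ((n:ℝ) - 1) := by positivity
  have hval1 : 2 / ((n:ℝ) - 1) ≤ 1 := by
    rw [div_le_one hn1]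
    have : (3:ℝ) ≤ (n:ℝ) := by exact_mod_cast hn
    linarith
  refine ⟨fun i j => ?_, fun i => ?_, fun v => ?_, fun S h3 h3' => ?_, fun i j => ?_⟩
  · unfold unifPt; by_cases h : i = j <;> simp [h, eq_comm]
  · simp [unifPt]
  · have h1 : ∀ j : Fin n, unifPt n v j = 2 / ((n:ℝ) - 1) - (if v = j then 2 / ((n:ℝ)-1) else 0) := by
      intro j; unfold unifPt; by_cases h : v = j <;> simp [h]
    rw [Finset.sum_congr rfl fun j _ => h1 j, Finset.sum_sub_distrib]
    simp [Finset.card_univ, mul_comm]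
    field_simp
  · have h1 : ∀ i ∈ S, ∀ j ∈ Sᶜ, unifPt n i j = 2 / ((n:ℝ) - 1) := by
      intro i hi j hj
      have : i ≠ j := fun h => (Finset.mem_compl.1 hj) (h ▸ hi)
      simp [unifPt, this]
    calc (2:ℝ) ≤ (S.card : ℝ) * ((Sᶜ.card : ℝ)) * (2 / ((n:ℝ) - 1)) := by
          have hcard : (Sᶜ.card : ℝ) = (n:ℝ) - (S.card:ℝ) := by
            have hle : S.card ≤ Fintype.card (Fin n) := Finset.card_le_univ S
            rw [Finset.card_compl, Nat.cast_sub hle, Fintype.card_fin]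
          rw [hcard]
          have hs3 : (3:ℝ) ≤ (S.card:ℝ) := by exact_mod_cast h3
          have hs3' : (S.card:ℝ) + 3 ≤ (n:ℝ) := by exact_mod_cast h3'
          rw [← sub_nonneg]
          have key : (S.card:ℝ) * ((n:ℝ) - (S.card:ℝ)) * (2 / ((n:ℝ)-1)) - 2
              = 2 * (((S.card:ℝ) - 1) * ((n:ℝ) - (S.card:ℝ) - 1)) / ((n:ℝ)-1) := by
            field_simp; ring
          rw [key]
          apply div_nonneg _ (le_of_lt hn1)
          nlinarith
      _ = ∑ i ∈ S, ∑ j ∈ Sᶜ, unifPt n i j := by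
          rw [Finset.sum_congr rfl fun i hi => Finset.sum_congr rfl fun j hj => h1 i hi j hj]
          simp [mul_assoc]
  · unfold unifPt; by_cases h : i = j <;> simp [h, hval, hval1]

end Aux

section Aux2
open Finset

variable {n : ℕ} {x c : Fin n → Fin n → ℝ}

lemma cut_swap (hsym : ∀ i j, x i j = x j i) (S : Finset (Fin n)) :
    ∑ i ∈ S, ∑ j ∈ Sᶜ, x i j = ∑ i ∈ Sᶜ, ∑ j ∈ (Sᶜ)ᶜ, x i j := by
  rw [compl_compl, Finset.sum_comm]
  exact Finset.sum_congr rfl fun i _ => Finset.sum_congr rfl fun j _ => hsym j i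

lemma cut_small (hx : InPSEP n x) (S : Finset (Fin n)) (hS : S.Nonempty)
    (hcard : S.card ≤ 2) : 2 ≤ ∑ i ∈ S, ∑ j ∈ Sᶜ, x i j := by
  obtain ⟨hsym, hdiag, hdeg, hcut, hbd⟩ := hx
  have hsplit : ∀ i : Fin n, ∑ j ∈ Sᶜ, x i j = 2 - ∑ j ∈ S, x i j := by
    intro i
    have := Finset.sum_add_sum_compl S (x i)
    rw [hdeg i] at this
    linarith
  rw [Finset.sum_congr rfl fun i _ => hsplit i, Finset.sum_sub_distrib, Finset.sum_const]
  interval_cases h : S.card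
  · exact absurd (Finset.card_eq_zero.1 h) (Finset.nonempty_iff_ne_empty.1 hS)
  · obtain ⟨a, rfl⟩ := Finset.card_eq_one.1 h
    simp [hdiag a]
  · obtain ⟨a, b, hab, rfl⟩ := Finset.card_eq_two.1 h
    rw [Finset.sum_pair hab]
    rw [Finset.sum_pair hab, Finset.sum_pair hab]
    have h1 := hdiag a
    have h2 := hdiag b
    have h3 := hsym a b
    have h4 := (hbd a b).2
    have : (2 • (2:ℝ)) = 4 := by norm_num
    rw [this]
    linarith

lemma cut_ge_two (hx : InPSEP n x) (S : Finset (Fin n)) (hS : S.Nonempty)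
    (hS' : Sᶜ.Nonempty) : 2 ≤ ∑ i ∈ S, ∑ j ∈ Sᶜ, x i j := by
  by_cases h : 3 ≤ S.card ∧ S.card + 3 ≤ n
  · exact hx.2.2.2.1 S h.1 h.2
  · push_neg at h
    by_cases h1 : S.card ≤ 2
    · exact cut_small hx S hS h1
    · have hc : Sᶜ.card ≤ 2 := by
        have h2 := h (by omega)
        have h3 : S.card ≤ n := by simpa using Finset.card_le_univ S
        rw [Finset.card_compl, Fintype.card_fin]
        omega
      rw [cut_swap hx.1 S]
      exact cut_small hx Sᶜ hS' hc

lemma dotE_nonneg (hc : ∀ i j, 0 ≤ c i j) (hx : ∀ i j, 0 ≤ x i j) :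
    0 ≤ dotE n c x := by
  unfold dotE
  apply div_nonneg _ (by norm_num)
  exact Finset.sum_nonneg fun i _ => Finset.sum_nonneg fun j _ =>
    mul_nonneg (hc i j) (hx i j)

end Aux2

section Aux3
open Finset

variable {n : ℕ} {c x : Fin n → Fin n → ℝ}

lemma dotE_ge_max (hc : IsMetric n c) (hx : InPSEP n x) (a b : Fin n) :
    2 * c a b ≤ ((n:ℝ) + 1) * dotE n c x := by
  have hxnn : ∀ i j, 0 ≤ x i j := fun i j => (hx.2.2.2.2 i j).1
  have hdnn : 0 ≤ dotE n c x := dotE_nonneg hc.2.2.1 hxnn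
  by_cases hM : c a b ≤ 0
  · nlinarith [Nat.cast_nonneg (α := ℝ) n]
  push_neg at hM
  obtain ⟨csym, cdiag, cnn, ctri⟩ := hc
  have hab : a ≠ b := by
    rintro rfl
    rw [cdiag] at hM
    linarith
  have hn1 : (0:ℝ) < (n:ℝ) + 1 := by positivity
  set M := c a b with hMdef
  set δ := M / ((n:ℝ) + 1) with hd
  have hδ : 0 < δ := div_pos hM hn1
  set idx : Fin n → ℕ := fun j => ⌈c a j / δ⌉₊ with hidx
  have hnotsub : ¬ Finset.Icc 1 (n+1) ⊆ Finset.image idx Finset.univ := by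
    intro hsub
    have h1 := Finset.card_le_card hsub
    have h2 := Finset.card_image_le (s := (Finset.univ : Finset (Fin n))) (f := idx)
    simp only [Nat.card_Icc, Finset.card_univ, Fintype.card_fin] at h1 h2
    omega
  obtain ⟨k, hkmem, hknot⟩ : ∃ k ∈ Finset.Icc 1 (n+1), k ∉ Finset.image idx Finset.univ := by
    by_contra hcon
    push_neg at hcon
    exact hnotsub fun k hk => hcon k hk
  obtain ⟨hk1, hk2⟩ := Finset.mem_Icc.1 hkmem
  have hidxne : ∀ j, idx j ≠ k := fun j hj =>
    hknot (Finset.mem_image.2 ⟨j, Finset.mem_univ j, hj⟩)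
  set t : ℝ := ((k - 1 : ℕ) : ℝ) * δ with ht
  have htnn : 0 ≤ t := mul_nonneg (Nat.cast_nonneg _) hδ.le
  set S : Finset (Fin n) := Finset.univ.filter (fun j => c a j ≤ t) with hSdef
  have haS : a ∈ S := by
    apply Finset.mem_filter.2
    refine ⟨Finset.mem_univ a, ?_⟩
    rw [cdiag]
    exact htnn
  have htM : t < M := by
    have hkn : ((k - 1 : ℕ) : ℝ) ≤ (n : ℝ) := by exact_mod_cast (by omega : k - 1 ≤ n)
    have h1 : t ≤ (n:ℝ) * δ := mul_le_mul_of_nonneg_right hkn hδ.le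
    have h2 : ((n:ℝ) + 1) * δ = M := by rw [hd]; field_simp
    nlinarith
  have hbS : b ∉ S := by
    intro hmem
    have := (Finset.mem_filter.1 hmem).2
    rw [← hMdef] at this
    linarith
  have hcross : ∀ i ∈ S, ∀ j ∈ Sᶜ, δ ≤ c i j := by
    intro i hi j hj
    have hgi : c a i ≤ t := (Finset.mem_filter.1 hi).2
    have hjS : j ∉ S := Finset.mem_compl.1 hj
    have hgj : t < c a j := by
      by_contra hcon
      push_neg at hcon
      exact hjS (Finset.mem_filter.2 ⟨Finset.mem_univ j, hcon⟩)
    have hstep : (k : ℝ) * δ < c a j := by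
      have h1 : (k - 1 : ℕ) < idx j := by
        rw [hidx]
        rw [Nat.lt_ceil]
        rw [lt_div_iff₀ hδ]
        exact hgj
      have h2 : k < idx j := by
        have := hidxne j
        omega
      have h3 : (k : ℝ) < c a j / δ := by
        have := Nat.lt_ceil.1 (by simpa [hidx] using h2)
        exact this
      exact (lt_div_iff₀ hδ).1 h3
    have htri : c a j ≤ c a i + c i j := by
      rcases eq_or_ne i a with rfl | hia
      · rw [cdiag]
        simp
      · have hja : j ≠ a := fun h => hjS (h ▸ haS)
        have hij : i ≠ j := fun h => hjS (h ▸ hi)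
        exact ctri a j i (Ne.symm hja) (fun h => hij h.symm) (Ne.symm hia)
    have hkk : (k : ℝ) * δ - t = δ := by
      have hcast : ((k : ℕ) : ℝ) = ((k - 1 : ℕ) : ℝ) + 1 := by
        exact_mod_cast (by omega : k = (k - 1) + 1)
      rw [ht, hcast]
      ring
    linarith
  have hScut : 2 ≤ ∑ i ∈ S, ∑ j ∈ Sᶜ, x i j :=
    cut_ge_two hx S ⟨a, haS⟩ ⟨b, Finset.mem_compl.2 hbS⟩
  have hcxS : 2 * δ ≤ ∑ i ∈ S, ∑ j ∈ Sᶜ, c i j * x i j := by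
    calc 2 * δ ≤ δ * ∑ i ∈ S, ∑ j ∈ Sᶜ, x i j := by nlinarith
      _ = ∑ i ∈ S, ∑ j ∈ Sᶜ, δ * x i j := by
          rw [Finset.mul_sum]
          exact Finset.sum_congr rfl fun i _ => Finset.mul_sum _ _ _
      _ ≤ ∑ i ∈ S, ∑ j ∈ Sᶜ, c i j * x i j :=
          Finset.sum_le_sum fun i hi => Finset.sum_le_sum fun j hj =>
            mul_le_mul_of_nonneg_right (hcross i hi j hj) (hxnn i j)
  have hsplit : ∑ i, ∑ j, c i j * x i j
      = (∑ i ∈ S, ∑ j ∈ S, c i j * x i j + ∑ i ∈ S, ∑ j ∈ Sᶜ, c i j * x i j)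
        + (∑ i ∈ Sᶜ, ∑ j ∈ S, c i j * x i j + ∑ i ∈ Sᶜ, ∑ j ∈ Sᶜ, c i j * x i j) := by
    rw [← Finset.sum_add_sum_compl S (fun i => ∑ j, c i j * x i j)]
    congr 1
    · exact (Finset.sum_congr rfl fun i _ =>
        (Finset.sum_add_sum_compl S (fun j => c i j * x i j)).symm).trans
        Finset.sum_add_distrib
    · exact (Finset.sum_congr rfl fun i _ =>
        (Finset.sum_add_sum_compl S (fun j => c i j * x i j)).symm).trans
        Finset.sum_add_distrib
  have heq : ∑ i ∈ Sᶜ, ∑ j ∈ S, c i j * x i j = ∑ i ∈ S, ∑ j ∈ Sᶜ, c i j * x i j := by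
    rw [Finset.sum_comm]
    exact Finset.sum_congr rfl fun i _ => Finset.sum_congr rfl fun j _ => by
      rw [csym j i, hx.1 j i]
  have hSS : 0 ≤ ∑ i ∈ S, ∑ j ∈ S, c i j * x i j :=
    Finset.sum_nonneg fun i _ => Finset.sum_nonneg fun j _ => mul_nonneg (cnn i j) (hxnn i j)
  have hScSc : 0 ≤ ∑ i ∈ Sᶜ, ∑ j ∈ Sᶜ, c i j * x i j :=
    Finset.sum_nonneg fun i _ => Finset.sum_nonneg fun j _ => mul_nonneg (cnn i j) (hxnn i j)
  have htotal : 2 * (2 * δ) ≤ ∑ i, ∑ j, c i j * x i j := by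
    rw [hsplit, heq]
    linarith
  have hdot : 2 * δ ≤ dotE n c x := by
    unfold dotE
    linarith
  have h2 : ((n:ℝ) + 1) * (2 * δ) = 2 * M := by rw [hd]; field_simp
  nlinarith

end Aux3

section Aux4
open Finset

variable {n : ℕ} {c : Fin n → Fin n → ℝ}

lemma tourCost_nonneg (hc : ∀ i j, 0 ≤ c i j) (σ : Equiv.Perm (Fin n)) :
    0 ≤ tourCost n c σ := Finset.sum_nonneg fun i _ => hc _ _

lemma TSP_nonneg (hc : ∀ i j, 0 ≤ c i j) : 0 ≤ TSP n c :=
  Real.sInf_nonneg fun r hr => by obtain ⟨σ, rfl⟩ := hr; exact tourCost_nonneg hc σ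

lemma TSP_le (hc : ∀ i j, 0 ≤ c i j) (σ : Equiv.Perm (Fin n)) : TSP n c ≤ tourCost n c σ :=
  csInf_le ⟨0, fun r hr => by obtain ⟨τ, rfl⟩ := hr; exact tourCost_nonneg hc τ⟩ ⟨σ, rfl⟩

lemma TSP_le_card_mul (hc : ∀ i j, 0 ≤ c i j) (a b : Fin n) (hmax : ∀ i j, c i j ≤ c a b) :
    TSP n c ≤ (n : ℝ) * c a b := by
  refine (TSP_le hc 1).trans ?_
  unfold tourCost
  calc ∑ i, c ((1 : Equiv.Perm (Fin n)) i) ((1 : Equiv.Perm (Fin n)) (finRotate n i))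
      ≤ ∑ _i : Fin n, c a b := Finset.sum_le_sum fun i _ => hmax _ _
    _ = (n : ℝ) * c a b := by
        rw [Finset.sum_const, Finset.card_univ, Fintype.card_fin, nsmul_eq_mul]

lemma SEP_le (hn : 3 ≤ n) (hc : IsMetric n c) {x} (hx : InPSEP n x) :
    SEP n c ≤ dotE n c x :=
  csInf_le ⟨0, fun r hr => by
    obtain ⟨y, hy, rfl⟩ := hr
    exact dotE_nonneg hc.2.2.1 fun i j => (hy.2.2.2.2 i j).1⟩ ⟨x, hx, rfl⟩

lemma SEP_ge (hn : 3 ≤ n) (hc : IsMetric n c) (a b : Fin n) :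
    2 * c a b / ((n:ℝ) + 1) ≤ SEP n c := by
  unfold SEP
  refine le_csInf ⟨dotE n c (unifPt n), unifPt n, unifPt_mem hn, rfl⟩ ?_
  rintro r ⟨y, hy, rfl⟩
  rw [div_le_iff₀ (by positivity)]
  have := dotE_ge_max hc hy a b
  linarith

lemma exists_max_pair (hn : 3 ≤ n) (c : Fin n → Fin n → ℝ) :
    ∃ a b : Fin n, ∀ i j, c i j ≤ c a b := by
  have : Nonempty (Fin n) := ⟨⟨0, by omega⟩⟩
  obtain ⟨p, -, hp⟩ := Finset.exists_max_image (Finset.univ : Finset (Fin n × Fin n))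
    (fun p => c p.1 p.2) Finset.univ_nonempty
  exact ⟨p.1, p.2, fun i j => hp (i, j) (Finset.mem_univ _)⟩

lemma ratio_bound1 (hn : 3 ≤ n) (hc : IsMetric n c) {x} (hx : InPSEP n x)
    (hpos : 0 < dotE n c x) : TSP n c / dotE n c x ≤ (n:ℝ) * ((n:ℝ) + 1) / 2 := by
  obtain ⟨a, b, hab⟩ := exists_max_pair hn c
  rw [div_le_iff₀ hpos]
  have h1 := TSP_le_card_mul hc.2.2.1 a b hab
  have h2 := dotE_ge_max hc hx a b
  have hnn : (0:ℝ) ≤ n := Nat.cast_nonneg n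
  nlinarith [mul_le_mul_of_nonneg_left h2 hnn]

lemma ratio_bound2 (hn : 3 ≤ n) (hc : IsMetric n c) (hpos : 0 < SEP n c) :
    TSP n c / SEP n c ≤ (n:ℝ) * ((n:ℝ) + 1) / 2 := by
  obtain ⟨a, b, hab⟩ := exists_max_pair hn c
  rw [div_le_iff₀ hpos]
  have h1 := TSP_le_card_mul hc.2.2.1 a b hab
  have h2 := SEP_ge hn hc a b
  rw [div_le_iff₀ (by positivity : (0:ℝ) < (n:ℝ) + 1)] at h2
  have hnn : (0:ℝ) ≤ n := Nat.cast_nonneg n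
  nlinarith [mul_le_mul_of_nonneg_left h2 hnn]

lemma gapPlus_nonneg {x : Fin n → Fin n → ℝ} : 0 ≤ GapPlus n x := by
  apply Real.sSup_nonneg
  rintro r ⟨c, hc, hpos, rfl⟩
  exact div_nonneg (TSP_nonneg hc.2.2.1) hpos.le

lemma gapPlus_le (hn : 3 ≤ n) {x : Fin n → Fin n → ℝ} (hx : InPSEP n x) :
    GapPlus n x ≤ (n:ℝ) * ((n:ℝ) + 1) / 2 := by
  apply Real.sSup_le
  · rintro r ⟨c, hc, hpos, rfl⟩
    exact ratio_bound1 hn hc hx hpos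
  · positivity

end Aux4

section Aux5
open Finset

variable {n : ℕ}

lemma contEval (i j : Fin n) : Continuous fun x : Fin n → Fin n → ℝ => x i j :=
  (continuous_apply j).comp (continuous_apply i)

lemma PSEP_isClosed : IsClosed (PSEP n) := by
  have heq : PSEP n =
      (⋂ (i : Fin n) (j : Fin n), {x : Fin n → Fin n → ℝ | x i j = x j i}) ∩
      ((⋂ (i : Fin n), {x : Fin n → Fin n → ℝ | x i i = 0}) ∩
      ((⋂ (v : Fin n), {x : Fin n → Fin n → ℝ | (∑ j, x v j) = 2}) ∩
      ((⋂ (S : Finset (Fin n)) (_ : 3 ≤ S.card) (_ : S.card + 3 ≤ n),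
          {x : Fin n → Fin n → ℝ | 2 ≤ ∑ i ∈ S, ∑ j ∈ Sᶜ, x i j}) ∩
      (⋂ (i : Fin n) (j : Fin n),
          {x : Fin n → Fin n → ℝ | 0 ≤ x i j ∧ x i j ≤ 1})))) := by
    ext x
    simp only [PSEP, InPSEP, Set.mem_inter_iff, Set.mem_iInter, Set.mem_setOf_eq]
  rw [heq]
  refine IsClosed.inter ?_ (IsClosed.inter ?_ (IsClosed.inter ?_ (IsClosed.inter ?_ ?_)))
  · exact isClosed_iInter fun i => isClosed_iInter fun j =>
      isClosed_eq (contEval i j) (contEval j i)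
  · exact isClosed_iInter fun i => isClosed_eq (contEval i i) continuous_const
  · exact isClosed_iInter fun v =>
      isClosed_eq (continuous_finset_sum _ fun j _ => contEval v j) continuous_const
  · exact isClosed_iInter fun S => isClosed_iInter fun _ => isClosed_iInter fun _ =>
      isClosed_le continuous_const
        (continuous_finset_sum _ fun i _ => continuous_finset_sum _ fun j _ => contEval i j)
  · exact isClosed_iInter fun i => isClosed_iInter fun j =>
      (isClosed_le continuous_const (contEval i j)).inter
        (isClosed_le (contEval i j) continuous_const)

lemma PSEP_isCompact : IsCompact (PSEP n) := by
  have hsub : PSEP n ⊆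
      Set.pi Set.univ fun _ : Fin n => Set.pi Set.univ fun _ : Fin n => Set.Icc (0:ℝ) 1 := by
    intro x hx
    rw [Set.mem_univ_pi]
    intro i
    rw [Set.mem_univ_pi]
    intro j
    exact ⟨(hx.2.2.2.2 i j).1, (hx.2.2.2.2 i j).2⟩
  exact IsCompact.of_isClosed_subset
    (isCompact_univ_pi fun i => isCompact_univ_pi fun j => isCompact_Icc)
    PSEP_isClosed hsub

noncomputable def negCost (n : ℕ) (c : Fin n → Fin n → ℝ) : (Fin n → Fin n → ℝ) →L[ℝ] ℝ :=
  LinearMap.toContinuousLinearMap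
  { toFun := fun y => -∑ i, ∑ j, c i j * y i j
    map_add' := fun y z => by
      simp only [Pi.add_apply, mul_add, Finset.sum_add_distrib]
      ring
    map_smul' := fun a y => by
      have h : ∑ i, ∑ j, c i j * (a * y i j) = a * ∑ i, ∑ j, c i j * y i j := by
        rw [Finset.mul_sum]
        refine Finset.sum_congr rfl fun i _ => ?_
        rw [Finset.mul_sum]
        exact Finset.sum_congr rfl fun j _ => by ring
      simp only [Pi.smul_apply, smul_eq_mul, RingHom.id_apply, h]
      ring }

lemma negCost_eq (c y : Fin n → Fin n → ℝ) :
    negCost n c y = -(2 * dotE n c y) := by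
  show -∑ i, ∑ j, c i j * y i j = -(2 * dotE n c y)
  unfold dotE
  ring

lemma exists_vertex_min (hn : 3 ≤ n) (c : Fin n → Fin n → ℝ) (hc : ∀ i j, 0 ≤ c i j) :
    ∃ x, IsVertex n x ∧ InPSEP n x ∧ dotE n c x = SEP n c := by
  have hne : (PSEP n).Nonempty := ⟨unifPt n, unifPt_mem hn⟩
  have hcont : Continuous fun y : Fin n → Fin n → ℝ => dotE n c y := by
    unfold dotE
    exact (continuous_finset_sum _ fun i _ => continuous_finset_sum _ fun j _ =>
      (continuous_const.mul (contEval i j))).div_const 2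
  obtain ⟨x₁, hx₁, hmin⟩ := PSEP_isCompact.exists_isMinOn hne hcont.continuousOn
  have hminval : ∀ y ∈ PSEP n, dotE n c x₁ ≤ dotE n c y := fun y hy =>
    isMinOn_iff.mp hmin y hy
  set B : Set (Fin n → Fin n → ℝ) :=
    {y ∈ PSEP n | ∀ z ∈ PSEP n, negCost n c z ≤ negCost n c y} with hB
  have hExp : IsExposed ℝ (PSEP n) B := fun _ => ⟨negCost n c, rfl⟩
  have hx₁B : x₁ ∈ B := by
    refine ⟨hx₁, fun z hz => ?_⟩
    rw [negCost_eq, negCost_eq]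
    have := hminval z hz
    linarith
  obtain ⟨x', hx'⟩ := (hExp.isCompact PSEP_isCompact).extremePoints_nonempty ⟨x₁, hx₁B⟩
  have hx'B : x' ∈ B := extremePoints_subset hx'
  have hx'P : InPSEP n x' := hx'B.1
  refine ⟨x', hExp.isExtreme.extremePoints_subset_extremePoints hx', hx'P, ?_⟩
  have hminx' : ∀ y ∈ PSEP n, dotE n c x' ≤ dotE n c y := by
    intro y hy
    have := hx'B.2 y hy
    rw [negCost_eq, negCost_eq] at this
    linarith
  apply le_antisymm
  · unfold SEP
    refine le_csInf ⟨dotE n c (unifPt n), unifPt n, unifPt_mem hn, rfl⟩ ?_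
    rintro r ⟨y, hy, rfl⟩
    exact hminx' y hy
  · unfold SEP
    exact csInf_le ⟨0, fun r hr => by
      obtain ⟨y, hy, rfl⟩ := hr
      exact dotE_nonneg hc fun i j => (hy.2.2.2.2 i j).1⟩ ⟨x', hx'P, rfl⟩

end Aux5

section Aux6
open Finset

variable {n : ℕ}

noncomputable def discMetric (n : ℕ) : Fin n → Fin n → ℝ :=
  fun i j => if i = j then 0 else 1

lemma discMetric_isMetric : IsMetric n (discMetric n) := by
  refine ⟨fun i j => ?_, fun i => ?_, fun i j => ?_, fun i j k hij hjk hik => ?_⟩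
  · unfold discMetric; by_cases h : i = j <;> simp [h, eq_comm]
  · simp [discMetric]
  · unfold discMetric; split <;> norm_num
  · unfold discMetric
    simp only [if_neg hij, if_neg hik, if_neg (Ne.symm hjk)]
    norm_num

lemma dotE_disc (hn : 3 ≤ n) {y : Fin n → Fin n → ℝ} (hy : InPSEP n y) :
    dotE n (discMetric n) y = n := by
  unfold dotE
  have h : ∀ i j : Fin n, discMetric n i j * y i j = y i j := by
    intro i j
    by_cases hij : i = j
    · subst hij; simp [discMetric, hy.2.1 i]
    · simp [discMetric, hij]
  rw [Finset.sum_congr rfl fun i _ => Finset.sum_congr rfl fun j _ => h i j]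
  rw [Finset.sum_congr rfl fun i _ => hy.2.2.1 i]
  rw [Finset.sum_const, Finset.card_univ, Fintype.card_fin, nsmul_eq_mul]
  ring

lemma SEP_disc (hn : 3 ≤ n) : SEP n (discMetric n) = n := by
  unfold SEP
  apply le_antisymm
  · exact csInf_le
      ⟨0, fun r hr => by
        obtain ⟨y, hy, rfl⟩ := hr
        rw [dotE_disc hn hy]
        positivity⟩
      ⟨unifPt n, unifPt_mem hn, (dotE_disc hn (unifPt_mem hn)).symm⟩
  · refine le_csInf ⟨dotE n (discMetric n) (unifPt n), unifPt n, unifPt_mem hn, rfl⟩ ?_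
    rintro r ⟨y, hy, rfl⟩
    rw [dotE_disc hn hy]

end Aux6


/-- For every `n ≥ 3`, the integrality gap of dimension `n`
equals the maximum of `Gap⁺` over the vertices of `P_SEP(n)`. -/
theorem integralityGap_eq_max_gapPlus (n : ℕ) (hn : 3 ≤ n) :
    sSup {r | ∃ c, IsMetric n c ∧ 0 < SEP n c ∧ r = TSP n c / SEP n c}
      = sSup {r | ∃ x, IsVertex n x ∧ r = GapPlus n x} := by
  set K : ℝ := (n:ℝ) * ((n:ℝ) + 1) / 2 with hK
  set L := {r | ∃ c, IsMetric n c ∧ 0 < SEP n c ∧ r = TSP n c / SEP n c} with hLdef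
  set R := {r | ∃ x, IsVertex n x ∧ r = GapPlus n x} with hRdef
  have hLbdd : BddAbove L := ⟨K, by rintro r ⟨c, hc, hpos, rfl⟩; exact ratio_bound2 hn hc hpos⟩
  have hRbdd : BddAbove R := ⟨K, by rintro r ⟨x, hx, rfl⟩; exact gapPlus_le hn hx.1⟩
  have hL0 : 0 ≤ sSup L := by
    have hSEPd : 0 < SEP n (discMetric n) := by
      rw [SEP_disc hn]
      have h3 : (3:ℝ) ≤ (n:ℝ) := by exact_mod_cast hn
      linarith
    have hmem : TSP n (discMetric n) / SEP n (discMetric n) ∈ L :=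
      ⟨discMetric n, discMetric_isMetric, hSEPd, rfl⟩
    exact (div_nonneg (TSP_nonneg discMetric_isMetric.2.2.1) hSEPd.le).trans
      (le_csSup hLbdd hmem)
  have hR0 : 0 ≤ sSup R := by
    obtain ⟨x₀, hx₀, -, -⟩ := exists_vertex_min hn (discMetric n) discMetric_isMetric.2.2.1
    exact gapPlus_nonneg.trans (le_csSup hRbdd ⟨x₀, hx₀, rfl⟩)
  apply le_antisymm
  · apply Real.sSup_le _ hR0
    rintro r ⟨c, hc, hpos, rfl⟩
    obtain ⟨x', hvx', hx'P, hdot⟩ := exists_vertex_min hn c hc.2.2.1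
    have h1 : TSP n c / SEP n c ≤ GapPlus n x' := by
      unfold GapPlus
      refine le_csSup ⟨K, ?_⟩ ⟨c, hc, by rw [hdot]; exact hpos, by rw [hdot]⟩
      rintro s ⟨c', hc', hpos', rfl⟩
      exact ratio_bound1 hn hc' hx'P hpos'
    exact h1.trans (le_csSup hRbdd ⟨x', hvx', rfl⟩)
  · apply Real.sSup_le _ hL0
    rintro r ⟨x, hvx, rfl⟩
    have hxP : InPSEP n x := hvx.1
    unfold GapPlus
    apply Real.sSup_le _ hL0
    rintro s ⟨c, hc, hpos, rfl⟩
    obtain ⟨a, b, hab⟩ := exists_max_pair hn c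
    have hM : 0 < c a b := by
      by_contra hcon
      push_neg at hcon
      have hzero : ∀ i j, c i j = 0 := fun i j =>
        le_antisymm ((hab i j).trans hcon) (hc.2.2.1 i j)
      have hdz : dotE n c x = 0 := by
        unfold dotE
        rw [Finset.sum_congr rfl fun i _ => Finset.sum_congr rfl fun j _ =>
          (by rw [hzero i j]; ring : c i j * x i j = 0)]
        simp
      rw [hdz] at hpos
      exact lt_irrefl 0 hpos
    have hSEPpos : 0 < SEP n c :=
      lt_of_lt_of_le (by positivity : (0:ℝ) < 2 * c a b / ((n:ℝ) + 1)) (SEP_ge hn hc a b)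
    have hSEPle : SEP n c ≤ dotE n c x := SEP_le hn hc hxP
    have hdiv : TSP n c / dotE n c x ≤ TSP n c / SEP n c := by
      gcongr
      exact TSP_nonneg hc.2.2.1
    exact hdiv.trans (le_csSup hLbdd ⟨c, hc, hSEPpos, rfl⟩)
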